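/- arXiv:2203.06633 — 6 statements merged into one kernel-verified Lean document; each statement's English description precedes it below -/
import Mathlib

section
/- The square root velocity transform R is a bijection from AC₀([0,1]; ℝ^d) = {c ∈ AC : c(0) = 0} onto L²([0,1]; ℝ^d), with inverse given by R⁻¹(q)(x) = ∫₀ˣ q(y)|q(y)| dy. -/
/-! Pointwise, `v ↦ (√‖v‖)⁻¹ • v` and `q ↦ ‖q‖ • q` are mutually inverse, so integrating
`‖R c‖ • R c = ċ` recovers `c`; and `‖‖q‖ • q‖ = ‖q‖ ^ 2`, so `q ∈ L²` makes `‖q‖ • q` integrable. -/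

open MeasureTheory Set
open scoped Classical

/-- The square root velocity transform, applied to the derivative `v = ċ` of a curve. -/
noncomputable def SRVT (d : ℕ) (v : ℝ → EuclideanSpace ℝ (Fin d)) :
    ℝ → EuclideanSpace ℝ (Fin d) :=
  fun x => if v x = 0 then 0 else (Real.sqrt ‖v x‖)⁻¹ • v x

section NormedSpace

variable {E : Type*} [NormedAddCommGroup E] [NormedSpace ℝ E]

lemma norm_norm_smul_self (v : E) : ‖‖v‖ • v‖ = ‖v‖ ^ 2 := by
  rw [norm_smul, norm_norm, sq]

lemma norm_inv_sqrt_norm_smul_smul (v : E) :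
    ‖(√‖v‖)⁻¹ • v‖ • (√‖v‖)⁻¹ • v = v := by
  rcases eq_or_ne v 0 with rfl | hv
  · simp
  have hpos : 0 < ‖v‖ := norm_pos_iff.mpr hv
  have hcoeff : ‖(√‖v‖)⁻¹ • v‖ * (√‖v‖)⁻¹ = 1 := by
    rw [norm_smul, norm_inv, Real.norm_of_nonneg (Real.sqrt_nonneg _)]
    field_simp
    exact (Real.sq_sqrt hpos.le).symm
  rw [smul_smul, hcoeff, one_smul]

lemma inv_sqrt_norm_smul_norm_smul_self {v : E} (hv : v ≠ 0) :
    (√‖‖v‖ • v‖)⁻¹ • ‖v‖ • v = v := by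
  rw [norm_norm_smul_self, Real.sqrt_sq (norm_nonneg _), smul_smul,
    inv_mul_cancel₀ (norm_ne_zero_iff.mpr hv), one_smul]

lemma MeasureTheory.MemLp.integrable_norm_smul_self {α : Type*} [MeasurableSpace α]
    {μ : Measure α} {q : α → E} (hq : MemLp q 2 μ) :
    Integrable (fun y => ‖q y‖ • q y) μ := by
  have hmeas : AEStronglyMeasurable (fun y => ‖q y‖ • q y) μ := hq.1.norm.smul hq.1
  refine (integrable_norm_iff hmeas).mp ?_
  simpa only [norm_norm_smul_self] using hq.integrable_norm_pow two_ne_zero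

end NormedSpace

lemma norm_SRVT_smul_SRVT (d : ℕ) (v : ℝ → EuclideanSpace ℝ (Fin d)) (y : ℝ) :
    ‖SRVT d v y‖ • SRVT d v y = v y := by
  unfold SRVT
  split_ifs with hv
  · simp [hv]
  · exact norm_inv_sqrt_norm_smul_smul (v y)

lemma SRVT_norm_smul_self (d : ℕ) (q : ℝ → EuclideanSpace ℝ (Fin d)) (x : ℝ) :
    SRVT d (fun y => ‖q y‖ • q y) x = q x := by
  unfold SRVT
  rcases eq_or_ne (q x) 0 with hq | hq
  · simp [hq]
  · rw [if_neg (smul_ne_zero (norm_ne_zero_iff.mpr hq) hq)]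
    exact inv_sqrt_norm_smul_norm_smul_self hq

/-- The SRVT is a bijection from `AC₀([0,1];ℝ^d)` onto `L²([0,1];ℝ^d)`,
with inverse `R⁻¹(q)(x) = ∫₀ˣ q|q| dy`.  Injectivity/left-inverse: every `c ∈ AC₀`
(with `c(0) = 0` and derivative `c'`) is recovered from `R(c)` by the inverse formula.
Surjectivity/right-inverse: every `q ∈ L²` arises as `R(c)` for the curve
`c(x) = ∫₀ˣ q|q| dy`, which is in `AC₀` with integrable derivative `q|q|`. -/
theorem srvt_bijective_AC0_L2 (d : ℕ) :
    (∀ c c' : ℝ → EuclideanSpace ℝ (Fin d),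
      IntegrableOn c' (Icc (0:ℝ) 1) → c 0 = 0 →
      (∀ x ∈ Icc (0:ℝ) 1, c x = ∫ t in (0:ℝ)..x, c' t) →
      ∀ x ∈ Icc (0:ℝ) 1,
        c x = ∫ y in (0:ℝ)..x, ‖SRVT d c' y‖ • SRVT d c' y) ∧
    (∀ q : ℝ → EuclideanSpace ℝ (Fin d),
      MemLp q 2 (volume.restrict (Icc (0:ℝ) 1)) →
      IntegrableOn (fun y => ‖q y‖ • q y) (Icc (0:ℝ) 1) ∧
      ∀ x, SRVT d (fun y => ‖q y‖ • q y) x = q x) := by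
  refine ⟨fun c c' _ _ hc x hx => ?_,
    fun q hq => ⟨hq.integrable_norm_smul_self, SRVT_norm_smul_self d q⟩⟩
  simp only [hc x hx, norm_SRVT_smul_SRVT]
end

section
/- The set Γ̄ = {γ ∈ AC([0,1];[0,1]) : γ(0)=0, γ(1)=1, γ' ≥ 0 a.e.} is the closure in AC([0,1];[0,1]) (with respect to the norm topology, i.e. ‖γ‖ = |γ(0)| + ‖γ'‖_{L¹}) of the set Γ = {γ ∈ AC([0,1];[0,1]) : γ(0)=0, γ(1)=1, γ' > 0 a.e.}. -/
/-!
Both conditions defining `Γ̄` (a.e. nonnegativity, unit mass) are closed in `L¹`, so `Γ̄` contains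
the closure of `Γ`. Conversely, when `μ` is finite the constant density lies in `Γ`, and for
`f ∈ Γ̄` the whole open segment from that constant to `f` lies in `Γ` (a positive weight on a
positive function keeps the sum positive), so `f` is a limit of points of `Γ`.
-/

open MeasureTheory Set

namespace MeasureTheory

variable {α : Type*} [MeasurableSpace α] (μ : Measure α)

def posDensities : Set (Lp ℝ 1 μ) :=
  {f | (∀ᵐ x ∂μ, 0 < f x) ∧ ∫ x, f x ∂μ = 1}

def nonnegDensities : Set (Lp ℝ 1 μ) :=
  {f | (∀ᵐ x ∂μ, 0 ≤ f x) ∧ ∫ x, f x ∂μ = 1}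

variable {μ}

theorem isClosed_nonnegDensities : IsClosed (nonnegDensities μ) := by
  have hnonneg : IsClosed {f : Lp ℝ 1 μ | 0 ≤ f} := isClosed_le continuous_const continuous_id
  have hmass : IsClosed {f : Lp ℝ 1 μ | ∫ x, f x ∂μ = 1} :=
    isClosed_eq continuous_integral continuous_const
  convert hnonneg.inter hmass using 1
  ext f
  exact and_congr_left' (Lp.coeFn_nonneg f)

theorem posDensities_subset_nonnegDensities : posDensities μ ⊆ nonnegDensities μ :=
  fun _ hf ↦ ⟨hf.1.mono fun _ hx ↦ hx.le, hf.2⟩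

theorem openSegment_subset_posDensities {g f : Lp ℝ 1 μ} (hg : g ∈ posDensities μ)
    (hf : f ∈ nonnegDensities μ) : openSegment ℝ g f ⊆ posDensities μ := by
  rintro _ ⟨a, b, ha, hb, hab, rfl⟩
  have hcoe : ⇑(a • g + b • f) =ᵐ[μ] fun x ↦ a * g x + b * f x := by
    filter_upwards [Lp.coeFn_add (a • g) (b • f), Lp.coeFn_smul a g, Lp.coeFn_smul b f]
      with x hsum hg hf
    rw [hsum, Pi.add_apply, hg, hf]
    rfl
  refine ⟨?_, ?_⟩
  · filter_upwards [hcoe, hg.1, hf.1] with x hx hgx hfx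
    rw [hx]
    positivity
  · rw [integral_congr_ae hcoe, integral_add ((L1.integrable_coeFn g).const_mul a)
      ((L1.integrable_coeFn f).const_mul b), integral_const_mul, integral_const_mul, hg.2, hf.2]
    simpa using hab

theorem const_mem_posDensities [IsFiniteMeasure μ] (hμ : μ ≠ 0) :
    Lp.const 1 μ (μ.real univ)⁻¹ ∈ posDensities μ := by
  have hmass : 0 < μ.real univ := by
    simpa [Measure.real, ENNReal.toReal_pos_iff, measure_lt_top] using hμ
  refine ⟨?_, ?_⟩
  · filter_upwards [Lp.coeFn_const (p := 1) (μ := μ) (μ.real univ)⁻¹] with x hx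
    rw [hx]
    exact inv_pos.mpr hmass
  · rw [integral_congr_ae (Lp.coeFn_const 1 μ _)]
    simp only [Function.const_apply, integral_const, smul_eq_mul, mul_inv_cancel₀ hmass.ne']

theorem nonnegDensities_subset_closure_posDensities [IsFiniteMeasure μ] :
    nonnegDensities μ ⊆ closure (posDensities μ) := by
  intro f hf
  have hμ : μ ≠ 0 := by
    rintro rfl
    simpa using hf.2
  exact closure_mono (openSegment_subset_posDensities (const_mem_posDensities hμ) hf)
    (segment_subset_closure_openSegment (right_mem_segment ℝ _ f))

theorem closure_posDensities [IsFiniteMeasure μ] :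
    closure (posDensities μ) = nonnegDensities μ :=
  (closure_minimal posDensities_subset_nonnegDensities isClosed_nonnegDensities).antisymm
    nonnegDensities_subset_closure_posDensities

end MeasureTheory

/-- A reparametrisation `γ` with `γ 0 = 0` is identified with `γ' ∈ L¹([0,1])`, under which the
AC norm `|γ 0| + ‖γ'‖_{L¹}` becomes the `L¹` norm and `γ 1 = 1` becomes `∫ γ' = 1`. -/
theorem gammaBar_eq_closure_gamma :
    closure {f : Lp ℝ 1 (volume.restrict (Icc (0:ℝ) 1)) |
        (∀ᵐ x ∂(volume.restrict (Icc (0:ℝ) 1)), 0 < f x) ∧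
        (∫ x, f x ∂(volume.restrict (Icc (0:ℝ) 1))) = 1}
      = {f : Lp ℝ 1 (volume.restrict (Icc (0:ℝ) 1)) |
        (∀ᵐ x ∂(volume.restrict (Icc (0:ℝ) 1)), 0 ≤ f x) ∧
        (∫ x, f x ∂(volume.restrict (Icc (0:ℝ) 1))) = 1} :=
  closure_posDensities
end

section
/- The functional S(c₁,c₂) = ∫₀¹ ⟨ċ₁/|ċ₁|, ċ₂/|ċ₂|⟩ √(|ċ₁||ċ₂|) dx on absolutely continuous curves is invariant under simultaneous reparametrisation: for all φ ∈ Γ̄, S(c₁ ∘ φ, c₂ ∘ φ) = S(c₁, c₂). -/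
open MeasureTheory Set
open scoped Classical RealInnerProductSpace

/-- The integrand of the SRV similarity functional `S`:
`h(u,v) = ⟨u/|u|, v/|v|⟩ √(|u||v|)`, set to `0` if `u = 0` or `v = 0`. -/
noncomputable def srvIntegrand (d : ℕ) (u v : EuclideanSpace ℝ (Fin d)) : ℝ :=
  if u = 0 ∨ v = 0 then 0
  else (inner ℝ (‖u‖⁻¹ • u) (‖v‖⁻¹ • v) : ℝ) * Real.sqrt (‖u‖ * ‖v‖)

/-!
The integrand is jointly positively homogeneous, `h(a u, a v) = a h(u, v)` for `a ≥ 0`, so the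
left-hand side is `∫₀¹ φ'(x) F(φ x) dx` with `F = h(ċ₁, ċ₂)`, and the claim is the substitution
`y = φ x`. As `φ` is only absolutely continuous, the substitution is done measure-theoretically:
the image of the measure `φ' dx` on `[0, 1]` under `φ` is Lebesgue measure on `[0, φ 1]`,
because for a continuous nondecreasing `φ` each sublevel set `{φ ≤ y}`, `y ≥ 0`, is an interval
`[0, t]` with `φ t = min y (φ 1)`, whose `φ' dx`-measure is `φ t`.
-/

open NormedSpace in
lemma srvIntegrand_smul_of_nonneg {d : ℕ} {a : ℝ} (ha : 0 ≤ a) (u v : EuclideanSpace ℝ (Fin d)) :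
    srvIntegrand d (a • u) (a • v) = a * srvIntegrand d u v := by
  rcases ha.eq_or_lt with rfl | ha
  · simp [srvIntegrand]
  have hsqrt : √(‖a • u‖ * ‖a • v‖) = a * √(‖u‖ * ‖v‖) := by
    rw [norm_smul, norm_smul, Real.norm_of_nonneg ha.le, mul_mul_mul_comm,
      Real.sqrt_mul (mul_self_nonneg a), Real.sqrt_mul_self ha.le]
  have hnormalize : ∀ w : EuclideanSpace ℝ (Fin d), ‖a • w‖⁻¹ • (a • w) = ‖w‖⁻¹ • w :=
    normalize_smul_of_pos ha
  simp only [srvIntegrand, smul_eq_zero, ha.ne', false_or]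
  split_ifs
  · simp
  · rw [hsqrt, hnormalize, hnormalize]
    ring

lemma measurable_srvIntegrand (d : ℕ) : Measurable (Function.uncurry (srvIntegrand d)) := by
  refine Measurable.ite ?_ measurable_const ?_
  · exact (measurable_fst (measurableSet_singleton 0)).union
      (measurable_snd (measurableSet_singleton 0))
  · fun_prop

theorem MonotoneOn.exists_Icc_inter_preimage_Iic_eq {α β : Type*}
    [ConditionallyCompleteLinearOrder α] [TopologicalSpace α] [OrderTopology α] [DenselyOrdered α]
    [LinearOrder β] [TopologicalSpace β] [OrderClosedTopology β]
    {f : α → β} {a b : α} {y : β} (hab : a ≤ b)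
    (hmono : MonotoneOn f (Icc a b)) (hcont : ContinuousOn f (Icc a b)) (hy : y ∈ Icc (f a) (f b)) :
    ∃ t ∈ Icc a b, f t = y ∧ Icc a b ∩ f ⁻¹' Iic y = Icc a t := by
  set S := Icc a b ∩ f ⁻¹' Iic y
  have hS_closed : IsClosed S := hcont.preimage_isClosed_of_isClosed isClosed_Icc isClosed_Iic
  have hS_bdd : BddAbove S := bddAbove_Icc.mono inter_subset_left
  have haS : a ∈ S := ⟨left_mem_Icc.2 hab, hy.1⟩
  have htS : sSup S ∈ S := hS_closed.csSup_mem ⟨a, haS⟩ hS_bdd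
  have hS_eq : S = Icc a (sSup S) := by
    refine Subset.antisymm (fun x hx => ⟨hx.1.1, le_csSup hS_bdd hx⟩) fun x hx => ?_
    have hxab : x ∈ Icc a b := ⟨hx.1, hx.2.trans htS.1.2⟩
    exact ⟨hxab, (hmono hxab htS.1 hx.2).trans htS.2⟩
  obtain ⟨s, hs, hsy⟩ : y ∈ f '' Icc (sSup S) b :=
    intermediate_value_Icc htS.1.2 (hcont.mono (Icc_subset_Icc_left htS.1.1)) ⟨htS.2, hy.2⟩
  have hsS : s ∈ S := ⟨⟨htS.1.1.trans hs.1, hs.2⟩, hsy.le⟩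
  have hst : s = sSup S := le_antisymm (le_csSup hS_bdd hsS) hs.1
  exact ⟨sSup S, htS.1, hst ▸ hsy, hS_eq⟩

section Primitive

variable {g : ℝ → ℝ} {a b : ℝ}

theorem continuousOn_primitive_of_le (hab : a ≤ b) (hg : IntegrableOn g (Icc a b)) :
    ContinuousOn (fun x => ∫ t in a..x, g t) (Icc a b) := by
  rw [← uIcc_of_le hab] at hg ⊢
  exact intervalIntegral.continuousOn_primitive_interval hg

theorem aemeasurable_primitive_withDensity_ofReal (hab : a ≤ b) (hg : IntegrableOn g (Icc a b)) :
    AEMeasurable (fun x => ∫ t in a..x, g t)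
      ((volume.restrict (Icc a b)).withDensity fun x => ENNReal.ofReal (g x)) :=
  ((continuousOn_primitive_of_le hab hg).aemeasurable measurableSet_Icc).mono_ac
    (withDensity_absolutelyContinuous _ _)

theorem monotoneOn_primitive_of_ae_nonneg (hg : IntegrableOn g (Icc a b))
    (hg0 : 0 ≤ᵐ[volume.restrict (Icc a b)] g) :
    MonotoneOn (fun x => ∫ t in a..x, g t) (Icc a b) := by
  intro x hx y hy hxy
  refine intervalIntegral.integral_mono_interval le_rfl hx.1 hxy
    (ae_restrict_of_ae_restrict_of_subset
      (Ioc_subset_Icc_self.trans (Icc_subset_Icc_right hy.2)) hg0)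
    ((intervalIntegrable_iff_integrableOn_Icc_of_le hy.1).2
      (hg.mono_set (Icc_subset_Icc_right hy.2)))

theorem withDensity_ofReal_Icc_eq_primitive (hg : IntegrableOn g (Icc a b))
    (hg0 : 0 ≤ᵐ[volume.restrict (Icc a b)] g) {t : ℝ} (ht : t ∈ Icc a b) :
    (volume.restrict (Icc a b)).withDensity (fun x => ENNReal.ofReal (g x)) (Icc a t)
      = ENNReal.ofReal (∫ s in a..t, g s) := by
  have hsub : Icc a t ⊆ Icc a b := Icc_subset_Icc_right ht.2
  rw [withDensity_apply _ measurableSet_Icc, Measure.restrict_restrict measurableSet_Icc,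
    inter_eq_left.2 hsub, ← ofReal_integral_eq_lintegral_ofReal (hg.mono_set hsub)
      (ae_restrict_of_ae_restrict_of_subset hsub hg0),
    intervalIntegral.integral_of_le ht.1, integral_Icc_eq_integral_Ioc]

theorem map_primitive_withDensity_ofReal (hab : a ≤ b) (hg : IntegrableOn g (Icc a b))
    (hg0 : 0 ≤ᵐ[volume.restrict (Icc a b)] g) :
    ((volume.restrict (Icc a b)).withDensity (fun x => ENNReal.ofReal (g x))).map
        (fun x => ∫ t in a..x, g t)
      = volume.restrict (Icc 0 (∫ t in a..b, g t)) := by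
  set ψ : ℝ → ℝ := fun x => ∫ t in a..x, g t
  set ν := (volume.restrict (Icc a b)).withDensity (fun x => ENNReal.ofReal (g x))
  have hψ_cont : ContinuousOn ψ (Icc a b) := continuousOn_primitive_of_le hab hg
  have hψ_mono := monotoneOn_primitive_of_ae_nonneg hg hg0
  have hψ_a : ψ a = 0 := intervalIntegral.integral_same
  have hψ_aemeas : AEMeasurable ψ ν := aemeasurable_primitive_withDensity_ofReal hab hg
  have hν_compl : ν (Icc a b)ᶜ = 0 :=
    withDensity_absolutelyContinuous _ _ (ae_restrict_mem measurableSet_Icc)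
  refine (Measure.ext_of_Iic _ _ fun y => ?_).symm
  rw [Measure.map_apply_of_aemeasurable hψ_aemeas measurableSet_Iic,
    ← measure_inter_conull hν_compl, inter_comm, Measure.restrict_apply measurableSet_Iic]
  have hψ_nonneg : ∀ x ∈ Icc a b, 0 ≤ ψ x := fun x hx =>
    hψ_a ▸ hψ_mono (left_mem_Icc.2 hab) hx hx.1
  change volume (Iic y ∩ Icc 0 (ψ b)) = _
  rcases lt_or_ge y 0 with hy | hy
  · have h₁ : Iic y ∩ Icc 0 (ψ b) = ∅ :=
      eq_empty_of_forall_notMem fun x hx => (hx.1.trans_lt hy).not_ge hx.2.1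
    have h₂ : Icc a b ∩ ψ ⁻¹' Iic y = ∅ :=
      eq_empty_of_forall_notMem fun x hx => ((hψ_nonneg x hx.1).trans hx.2).not_gt hy
    rw [h₁, h₂, measure_empty, measure_empty]
  · have hy' : min y (ψ b) ∈ Icc (ψ a) (ψ b) := by
      rw [hψ_a]
      exact ⟨le_min hy (hψ_nonneg b (right_mem_Icc.2 hab)), min_le_right _ _⟩
    obtain ⟨t, ht, hψt, hIcc⟩ := hψ_mono.exists_Icc_inter_preimage_Iic_eq hab hψ_cont hy'
    have h₁ : Iic y ∩ Icc 0 (ψ b) = Icc 0 (min y (ψ b)) := by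
      ext x
      simp only [mem_inter_iff, mem_Iic, mem_Icc, le_min_iff]
      tauto
    have h₂ : Icc a b ∩ ψ ⁻¹' Iic y = Icc a b ∩ ψ ⁻¹' Iic (min y (ψ b)) := by
      ext x
      simp only [mem_inter_iff, mem_preimage, mem_Iic, le_min_iff, and_congr_right_iff]
      exact fun hx => (and_iff_left (hψ_mono hx (right_mem_Icc.2 hab) hx.2)).symm
    rw [h₁, h₂, hIcc, withDensity_ofReal_Icc_eq_primitive hg hg0 ht, Real.volume_Icc, sub_zero]
    exact congrArg ENNReal.ofReal hψt.symm

theorem integral_Icc_smul_comp_primitive {E : Type*} [NormedAddCommGroup E] [NormedSpace ℝ E]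
    (hab : a ≤ b) (hg : IntegrableOn g (Icc a b)) (hg0 : 0 ≤ᵐ[volume.restrict (Icc a b)] g)
    {f : ℝ → E} (hf : AEStronglyMeasurable f (volume.restrict (Icc 0 (∫ t in a..b, g t)))) :
    ∫ x in Icc a b, g x • f (∫ t in a..x, g t) = ∫ y in Icc 0 (∫ t in a..b, g t), f y := by
  have hmap := map_primitive_withDensity_ofReal hab hg hg0
  calc ∫ x in Icc a b, g x • f (∫ t in a..x, g t)
      = ∫ x in Icc a b, (g x).toNNReal • f (∫ t in a..x, g t) := by
        refine integral_congr_ae ?_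
        filter_upwards [hg0] with x hx
        rw [NNReal.smul_def, Real.coe_toNNReal _ hx]
    _ = ∫ x, f (∫ t in a..x, g t)
          ∂(volume.restrict (Icc a b)).withDensity fun x => ENNReal.ofReal (g x) :=
        (integral_withDensity_eq_integral_smul₀ hg.aemeasurable.real_toNNReal _).symm
    _ = ∫ y in Icc 0 (∫ t in a..b, g t), f y := by
        rw [← hmap, integral_map (aemeasurable_primitive_withDensity_ofReal hab hg) (hmap ▸ hf)]

end Primitive

theorem srv_functional_reparam_invariant_general (d : ℕ)
    (c₁' c₂' : ℝ → EuclideanSpace ℝ (Fin d)) (φ g : ℝ → ℝ)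
    (hc₁' : IntegrableOn c₁' (Icc (0:ℝ) 1))
    (hc₂' : IntegrableOn c₂' (Icc (0:ℝ) 1))
    (hg : IntegrableOn g (Icc (0:ℝ) 1))
    (hg0 : ∀ᵐ x ∂(volume.restrict (Icc (0:ℝ) 1)), 0 ≤ g x)
    (hφ : ∀ x ∈ Icc (0:ℝ) 1, φ x = ∫ t in (0:ℝ)..x, g t)
    (hφ1 : φ 1 = 1) :
    (∫ x in Icc (0:ℝ) 1, srvIntegrand d (g x • c₁' (φ x)) (g x • c₂' (φ x)))
      = ∫ x in Icc (0:ℝ) 1, srvIntegrand d (c₁' x) (c₂' x) := by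
  have hg_total : ∫ t in (0:ℝ)..1, g t = 1 := (hφ 1 (right_mem_Icc.2 zero_le_one)).symm.trans hφ1
  have hS_meas : AEStronglyMeasurable (fun y => srvIntegrand d (c₁' y) (c₂' y))
      (volume.restrict (Icc 0 (∫ t in (0:ℝ)..1, g t))) := by
    rw [hg_total]
    exact ((measurable_srvIntegrand d).comp_aemeasurable
      (hc₁'.aemeasurable.prodMk hc₂'.aemeasurable)).aestronglyMeasurable
  calc (∫ x in Icc (0:ℝ) 1, srvIntegrand d (g x • c₁' (φ x)) (g x • c₂' (φ x)))
      = ∫ x in Icc (0:ℝ) 1, g x • srvIntegrand d (c₁' (∫ t in (0:ℝ)..x, g t))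
          (c₂' (∫ t in (0:ℝ)..x, g t)) := by
        refine integral_congr_ae ?_
        filter_upwards [hg0, ae_restrict_mem measurableSet_Icc] with x hx hx_mem
        rw [hφ x hx_mem, srvIntegrand_smul_of_nonneg hx, smul_eq_mul]
    _ = ∫ x in Icc (0:ℝ) 1, srvIntegrand d (c₁' x) (c₂' x) := by
        rw [integral_Icc_smul_comp_primitive zero_le_one hg hg0 hS_meas, hg_total]

/-- The functional `S(c₁,c₂) = ∫₀¹ ⟨ċ₁/|ċ₁|, ċ₂/|ċ₂|⟩ √(|ċ₁||ċ₂|) dx`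
is invariant under simultaneous reparametrisation by `φ ∈ Γ̄`: since the derivative of
`cᵢ ∘ φ` is `φ'·(ċᵢ ∘ φ)` a.e., we have `S(c₁∘φ, c₂∘φ) = S(c₁,c₂)`. -/
theorem srv_functional_reparam_invariant (d : ℕ)
    (c₁ c₂ c₁' c₂' : ℝ → EuclideanSpace ℝ (Fin d)) (φ g : ℝ → ℝ)
    (hc₁' : IntegrableOn c₁' (Icc (0:ℝ) 1))
    (hc₂' : IntegrableOn c₂' (Icc (0:ℝ) 1))
    (hc₁ : ∀ x ∈ Icc (0:ℝ) 1, c₁ x = c₁ 0 + ∫ t in (0:ℝ)..x, c₁' t)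
    (hc₂ : ∀ x ∈ Icc (0:ℝ) 1, c₂ x = c₂ 0 + ∫ t in (0:ℝ)..x, c₂' t)
    (hg : IntegrableOn g (Icc (0:ℝ) 1))
    (hg0 : ∀ᵐ x ∂(volume.restrict (Icc (0:ℝ) 1)), 0 ≤ g x)
    (hφ : ∀ x ∈ Icc (0:ℝ) 1, φ x = ∫ t in (0:ℝ)..x, g t)
    (hφ1 : φ 1 = 1) :
    (∫ x in Icc (0:ℝ) 1, srvIntegrand d (g x • c₁' (φ x)) (g x • c₂' (φ x)))
      = ∫ x in Icc (0:ℝ) 1, srvIntegrand d (c₁' x) (c₂' x) :=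
  srv_functional_reparam_invariant_general d c₁' c₂' φ g hc₁' hc₂' hg hg0 hφ hφ1
end

section
/- Let U be a Borel set, ν ∈ M₊(U) a nonzero positive finite Radon measure, g: U → ℝ_{≥0} a Borel function with ∫_U g dν > 0. If μ ∈ M₊(U) with μ(U) = 1 maximizes F(μ) = ∫_U g(x) √( (dμ/d(μ+ν)) · (dν/d(μ+ν)) ) d(μ+ν) over all positive measures of total mass 1, then μ is absolutely continuous with respect to ν. -/
/-! Writing `f = dμ/dν`, one has `F(μ) = ∫ g √f dν`: the singular part of `μ` contributes
nothing. If `μ` had a singular part of mass `s > 0`, moving that mass onto `ν` as the constant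
density `s / ν(univ)` would give a probability measure with `F = ∫ g √(f + s / ν(univ)) dν`,
which is strictly larger because `g` is not `ν`-a.e. zero. As `F` is the `toReal` of a lower
integral, this needs `∫ g √f dν < ∞` first, which follows from `F(μ) ≥ F(ν / ν(univ)) > 0`. -/

open MeasureTheory Set
open scoped ENNReal

/-- The Bhattacharyya-type functional
`F(μ) = ∫ g(x) √((dμ/d(μ+ν))·(dν/d(μ+ν))) d(μ+ν)`. -/
noncomputable def bhatFunctional {α : Type*} [MeasurableSpace α]
    (g : α → ℝ) (ν μ : Measure α) : ℝ :=
  ∫ x, g x * Real.sqrt ((μ.rnDeriv (μ + ν) x).toReal *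
    (ν.rnDeriv (μ + ν) x).toReal) ∂(μ + ν)

theorem Real.sqrt_add_le_sqrt_add_sqrt {x y : ℝ} (hx : 0 ≤ x) (hy : 0 ≤ y) :
    √(x + y) ≤ √x + √y :=
  Real.sqrt_le_iff.mpr ⟨by positivity, by
    nlinarith [Real.sq_sqrt hx, Real.sq_sqrt hy, Real.sqrt_nonneg x, Real.sqrt_nonneg y]⟩

theorem Real.mul_mul_sqrt_div {a b : ℝ} (c : ℝ) (hb : 0 ≤ b) :
    b * (c * √(a / b)) = c * √(a * b) := by
  rcases hb.eq_or_lt with rfl | hb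
  · simp
  · rw [show a * b = a / b * (b * b) by field_simp, Real.sqrt_mul' _ (by positivity),
      Real.sqrt_mul_self hb.le]
    ring

theorem ENNReal.ofReal_mul_sqrt_toReal_mul {p q : ℝ≥0∞} (hq : q ≠ ∞) (c : ℝ) :
    ENNReal.ofReal (c * √(p.toReal * q.toReal)) = q * ENNReal.ofReal (c * √(p / q).toReal) := by
  rw [ENNReal.toReal_div, ← Real.mul_mul_sqrt_div c ENNReal.toReal_nonneg,
    ENNReal.ofReal_mul ENNReal.toReal_nonneg, ENNReal.ofReal_toReal hq]

namespace MeasureTheory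

variable {α : Type*} [MeasurableSpace α] {μ ν : Measure α} {g : α → ℝ}

/-- Pointwise `√(p q) = q √(p / q)` for `p = dμ/d(μ+ν)`, `q = dν/d(μ+ν)`, and `p / q = dμ/dν`
holds `ν`-a.e. -/
theorem bhatFunctional_eq_toReal_lintegral [SigmaFinite μ] [SigmaFinite ν]
    (hgm : Measurable g) (hg0 : ∀ x, 0 ≤ g x) :
    bhatFunctional g ν μ =
      (∫⁻ x, ENNReal.ofReal (g x * √(μ.rnDeriv ν x).toReal) ∂ν).toReal := by
  have hν : ν ≪ μ + ν := Measure.AbsolutelyContinuous.rfl.add_right' μ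
  have hmeas : Measurable fun x ↦ g x * √(μ.rnDeriv (μ + ν) x / ν.rnDeriv (μ + ν) x).toReal :=
    hgm.mul (((μ.measurable_rnDeriv _).div (ν.measurable_rnDeriv _)).ennreal_toReal.sqrt)
  calc bhatFunctional g ν μ
      = (∫⁻ x, ENNReal.ofReal (g x * √((μ.rnDeriv (μ + ν) x).toReal *
          (ν.rnDeriv (μ + ν) x).toReal)) ∂(μ + ν)).toReal :=
        integral_eq_lintegral_of_nonneg_ae (ae_of_all _ fun x ↦ by have := hg0 x; positivity)
          (hgm.mul ((μ.measurable_rnDeriv _).ennreal_toReal.mul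
            (ν.measurable_rnDeriv _).ennreal_toReal).sqrt).aestronglyMeasurable
    _ = (∫⁻ x, ν.rnDeriv (μ + ν) x * ENNReal.ofReal (g x *
          √(μ.rnDeriv (μ + ν) x / ν.rnDeriv (μ + ν) x).toReal) ∂(μ + ν)).toReal := by
        congr 1
        refine lintegral_congr_ae ?_
        filter_upwards [ν.rnDeriv_lt_top (μ + ν)] with x hx
        exact ENNReal.ofReal_mul_sqrt_toReal_mul hx.ne (g x)
    _ = (∫⁻ x, ENNReal.ofReal (g x * √(μ.rnDeriv ν x).toReal) ∂ν).toReal := by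
        rw [lintegral_rnDeriv_mul hν hmeas.ennreal_ofReal.aemeasurable]
        congr 1
        refine lintegral_congr_ae ?_
        filter_upwards [μ.rnDeriv_eq_div_rnDeriv_add ν] with x hx
        rw [hx]

theorem bhatFunctional_withDensity [SigmaFinite ν] {f : α → ℝ≥0∞} (hf : Measurable f)
    (hf_top : ∀ᵐ x ∂ν, f x ≠ ∞) (hgm : Measurable g) (hg0 : ∀ x, 0 ≤ g x) :
    bhatFunctional g ν (ν.withDensity f) =
      (∫⁻ x, ENNReal.ofReal (g x * √(f x).toReal) ∂ν).toReal := by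
  have := SigmaFinite.withDensity_of_ne_top hf_top
  rw [bhatFunctional_eq_toReal_lintegral hgm hg0]
  congr 1
  refine lintegral_congr_ae ?_
  filter_upwards [Measure.rnDeriv_withDensity ν hf] with x hx
  rw [hx]

theorem lintegral_ofReal_mul_sqrt_add_le {u : α → ℝ} (hu0 : ∀ x, 0 ≤ u x) {c : ℝ} (hc : 0 ≤ c)
    (hgm : Measurable g) (hg0 : ∀ x, 0 ≤ g x) :
    ∫⁻ x, ENNReal.ofReal (g x * √(u x + c)) ∂ν ≤
      ∫⁻ x, ENNReal.ofReal (g x * √(u x)) ∂ν +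
        (∫⁻ x, ENNReal.ofReal (g x) ∂ν) * ENNReal.ofReal √c := by
  rw [← lintegral_mul_const _ hgm.ennreal_ofReal, ← lintegral_add_right' _ (by fun_prop)]
  refine lintegral_mono fun x ↦ ?_
  rw [← ENNReal.ofReal_mul (hg0 x), ← ENNReal.ofReal_add (by have := hg0 x; positivity)
    (by have := hg0 x; positivity), ← mul_add]
  exact ENNReal.ofReal_le_ofReal
    (mul_le_mul_of_nonneg_left (Real.sqrt_add_le_sqrt_add_sqrt (hu0 x) hc) (hg0 x))

theorem toReal_lintegral_ofReal_mul_sqrt_lt_add {u : α → ℝ} (hu : Measurable u)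
    (hu0 : ∀ x, 0 ≤ u x) {c : ℝ} (hc : 0 < c) (hgm : Measurable g) (hg0 : ∀ x, 0 ≤ g x)
    (hg_int : Integrable g ν) (hg_ne : ¬ g =ᵐ[ν] 0)
    (hL : ∫⁻ x, ENNReal.ofReal (g x * √(u x)) ∂ν ≠ ∞) :
    (∫⁻ x, ENNReal.ofReal (g x * √(u x)) ∂ν).toReal <
      (∫⁻ x, ENNReal.ofReal (g x * √(u x + c)) ∂ν).toReal := by
  have h_ne_top : ∫⁻ x, ENNReal.ofReal (g x * √(u x + c)) ∂ν ≠ ∞ :=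
    ne_top_of_le_ne_top (ENNReal.add_ne_top.mpr ⟨hL, ENNReal.mul_ne_top
      hg_int.lintegral_lt_top.ne ENNReal.ofReal_ne_top⟩)
      (lintegral_ofReal_mul_sqrt_add_le hu0 hc.le hgm hg0)
  have h_mono : ∀ x, g x * √(u x) ≤ g x * √(u x + c) := fun x ↦
    mul_le_mul_of_nonneg_left (Real.sqrt_le_sqrt (by linarith)) (hg0 x)
  have h_lt : ∃ᵐ x ∂ν, ENNReal.ofReal (g x * √(u x)) ≠ ENNReal.ofReal (g x * √(u x + c)) := by
    refine fun h_eq ↦ hg_ne ?_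
    filter_upwards [h_eq] with x hx
    by_contra hgx
    have hgx : 0 < g x := (hg0 x).lt_of_ne' hgx
    have h_sqrt : √(u x) < √(u x + c) := Real.sqrt_lt_sqrt (hu0 x) (by linarith)
    have h_pos : 0 < g x * √(u x + c) := mul_pos hgx ((Real.sqrt_nonneg _).trans_lt h_sqrt)
    exact hx ((ENNReal.ofReal_lt_ofReal_iff h_pos).mpr (mul_lt_mul_of_pos_left h_sqrt hgx)).ne
  exact ENNReal.toReal_strict_mono h_ne_top <|
    lintegral_strict_mono_of_ae_le_of_frequently_ae_lt (by fun_prop) hL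
      (ae_of_all _ fun x ↦ ENNReal.ofReal_le_ofReal (h_mono x)) h_lt

theorem toReal_lintegral_lt_bhatFunctional_withDensity_add_const [SigmaFinite ν]
    {f : α → ℝ≥0∞} (hf : Measurable f) (hf_top : ∀ᵐ x ∂ν, f x ≠ ∞) {t : ℝ≥0∞} (ht0 : t ≠ 0)
    (ht : t ≠ ∞) (hgm : Measurable g) (hg0 : ∀ x, 0 ≤ g x) (hg_int : Integrable g ν)
    (hg_ne : ¬ g =ᵐ[ν] 0) (hL : ∫⁻ x, ENNReal.ofReal (g x * √(f x).toReal) ∂ν ≠ ∞) :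
    (∫⁻ x, ENNReal.ofReal (g x * √(f x).toReal) ∂ν).toReal <
      bhatFunctional g ν (ν.withDensity (f + fun _ ↦ t)) := by
  have hft_top : ∀ᵐ x ∂ν, f x + t ≠ ∞ := by
    filter_upwards [hf_top] with x hx using ENNReal.add_ne_top.mpr ⟨hx, ht⟩
  rw [bhatFunctional_withDensity (hf.add measurable_const) hft_top hgm hg0]
  convert toReal_lintegral_ofReal_mul_sqrt_lt_add hf.ennreal_toReal
    (fun _ ↦ ENNReal.toReal_nonneg) (ENNReal.toReal_pos ht0 ht) hgm hg0 hg_int hg_ne hL using 2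
  refine lintegral_congr_ae ?_
  filter_upwards [hf_top] with x hx
  simp only [Pi.add_apply, ENNReal.toReal_add hx ht]

theorem withDensity_add_const_apply_univ {f : α → ℝ≥0∞} (hf : Measurable f) (t : ℝ≥0∞) :
    ν.withDensity (f + fun _ ↦ t) univ = ν.withDensity f univ + t * ν univ := by
  rw [withDensity_add_left hf, Measure.add_apply, withDensity_const, Measure.smul_apply,
    smul_eq_mul]

end MeasureTheory

/-- Let `ν` be a nonzero positive finite measure and `g ≥ 0` Borel with
`∫ g dν > 0`.  If `μ` with `μ(U) = 1` maximises
`F(μ) = ∫ g √((dμ/d(μ+ν))(dν/d(μ+ν))) d(μ+ν)` over all positive measures of total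
mass `1`, then `μ ≪ ν`. -/
theorem maximiser_absolutely_continuous {α : Type*} [MeasurableSpace α]
    (ν : Measure α) [IsFiniteMeasure ν] (hν : ν ≠ 0)
    (g : α → ℝ) (hgm : Measurable g) (hg0 : ∀ x, 0 ≤ g x)
    (hgpos : 0 < ∫ x, g x ∂ν)
    (μ : Measure α) [IsFiniteMeasure μ] (hμ1 : μ univ = 1)
    (hmax : ∀ μ' : Measure α, IsFiniteMeasure μ' → μ' univ = 1 →
      bhatFunctional g ν μ' ≤ bhatFunctional g ν μ) :
    μ ≪ ν := by
  have hg_int : Integrable g ν := Integrable.of_integral_ne_zero hgpos.ne'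
  have hg_ne : ¬ g =ᵐ[ν] 0 := fun h ↦ hgpos.ne' (integral_eq_zero_of_ae h)
  have hν0 : ν univ ≠ 0 := Measure.measure_univ_ne_zero.mpr hν
  have beats {f : α → ℝ≥0∞} (t : ℝ≥0∞) (hf : Measurable f) (hf_top : ∀ᵐ x ∂ν, f x ≠ ∞)
      (hL : ∫⁻ x, ENNReal.ofReal (g x * √(f x).toReal) ∂ν ≠ ∞) (ht0 : t ≠ 0) (ht : t ≠ ∞)
      (hmass : ν.withDensity f univ + t * ν univ = 1) :
      (∫⁻ x, ENNReal.ofReal (g x * √(f x).toReal) ∂ν).toReal < bhatFunctional g ν μ := by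
    rw [← withDensity_add_const_apply_univ hf] at hmass
    exact (toReal_lintegral_lt_bhatFunctional_withDensity_add_const hf hf_top ht0 ht hgm hg0
      hg_int hg_ne hL).trans_le (hmax _ ⟨by simp [hmass]⟩ hmass)
  have hF := bhatFunctional_eq_toReal_lintegral (μ := μ) (ν := ν) hgm hg0
  have hL : ∫⁻ x, ENNReal.ofReal (g x * √(μ.rnDeriv ν x).toReal) ∂ν ≠ ∞ := by
    have h := beats (f := 0) (ν univ)⁻¹ measurable_zero (ae_of_all _ fun _ ↦ ENNReal.zero_ne_top)
      (by simp) (ENNReal.inv_ne_zero.mpr (measure_ne_top _ _)) (ENNReal.inv_ne_top.mpr hν0)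
      (by simp [ENNReal.inv_mul_cancel hν0 (measure_ne_top _ _)])
    simp only [Pi.zero_apply, ENNReal.toReal_zero, Real.sqrt_zero, mul_zero, ENNReal.ofReal_zero,
      lintegral_zero, hF] at h
    exact (ENNReal.toReal_pos_iff.mp h).2.ne
  by_contra hac
  have hs0 : μ.singularPart ν univ ≠ 0 := by
    simpa [Measure.measure_univ_eq_zero, Measure.singularPart_eq_zero] using hac
  have hmass :
      ν.withDensity (μ.rnDeriv ν) univ + μ.singularPart ν univ / ν univ * ν univ = 1 := by
    rw [ENNReal.div_mul_cancel hν0 (measure_ne_top _ _), add_comm, ← hμ1, ← Measure.add_apply,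
      Measure.singularPart_add_rnDeriv]
  exact (beats _ (μ.measurable_rnDeriv ν) (μ.rnDeriv_ne_top ν) hL
    (ENNReal.div_ne_zero.mpr ⟨hs0, measure_ne_top _ _⟩)
    (ENNReal.div_ne_top (measure_ne_top _ _) hν0) hmass).ne hF.symm
end

section
/- Let c ∈ BV([0,1]; ℝ^d) and φ ∈ Γ̄. If c is continuous or φ is injective, then the set [c,φ] = {g ∈ BV([0,1];ℝ^d) : g(x) ∈ [c^ℓ(φ(x)), c^r(φ(x))] for all x, and len(g) = len(c)} consists of the single element c ∘ φ. -/
/-!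
Being a primitive of a nonnegative integrable function with `φ 0 = 0`, `φ 1 = 1`, `φ` is a
continuous nondecreasing surjection of `[0,1]`, so `c ∘ φ` has the variation of `c` and lies in
`[c,φ]`. Conversely, `[c^ℓ(y), c^r(y)] = {c y}` wherever `c` is continuous, and a BV curve is
continuous off a countable set (where its nondecreasing variation function jumps). Hence every
`g ∈ [c,φ]` equals `c ∘ φ` outside `φ⁻¹` of that set, which is empty if `c` is continuous and
countable, hence null, if `φ` is injective.
-/

open MeasureTheory Set Filter
open scoped ENNReal

/-- A good representative of a BV curve `[0,1] → ℝ^d`, together with one-sided limits. -/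
structure GoodBV (d : ℕ) where
  c : ℝ → EuclideanSpace ℝ (Fin d)
  cl : ℝ → EuclideanSpace ℝ (Fin d)
  cr : ℝ → EuclideanSpace ℝ (Fin d)
  bv : BoundedVariationOn c (Set.Icc 0 1)
  left : ∀ x ∈ Set.Ioc (0:ℝ) 1,
    Filter.Tendsto c (nhdsWithin x (Set.Ico 0 x)) (nhds (cl x))
  right : ∀ x ∈ Set.Ico (0:ℝ) 1,
    Filter.Tendsto c (nhdsWithin x (Set.Ioc x 1)) (nhds (cr x))
  l0 : cl 0 = c 0
  r1 : cr 1 = c 1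
  good : ∀ x ∈ Set.Icc (0:ℝ) 1, c x ∈ segment ℝ (cl x) (cr x)

section Primitive

variable {φ ψ : ℝ → ℝ} {a b : ℝ}

theorem monotoneOn_of_eq_intervalIntegral_of_nonneg (hψ : IntegrableOn ψ (Icc a b))
    (hψ0 : ∀ᵐ t ∂(volume.restrict (Icc a b)), 0 ≤ ψ t)
    (hφ : ∀ t ∈ Icc a b, φ t = ∫ s in a..t, ψ s) : MonotoneOn φ (Icc a b) := by
  intro x hx y hy hxy
  have hint : ∀ {u v}, u ∈ Icc a b → v ∈ Icc a b → IntervalIntegrable ψ volume u v :=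
    fun hu hv => (hψ.mono_set (uIcc_subset_Icc hu hv)).intervalIntegrable
  have ha : a ∈ Icc a b := ⟨le_rfl, hx.1.trans hx.2⟩
  have hsplit : φ y = φ x + ∫ s in x..y, ψ s := by
    rw [hφ x hx, hφ y hy,
      intervalIntegral.integral_add_adjacent_intervals (hint ha hx) (hint hx hy)]
  have hnonneg : 0 ≤ ∫ s in x..y, ψ s :=
    intervalIntegral.integral_nonneg_of_ae_restrict hxy
      (ae_restrict_of_ae_restrict_of_subset (Icc_subset_Icc hx.1 hy.2) hψ0)
  linarith

theorem continuousOn_of_eq_intervalIntegral (hψ : IntegrableOn ψ (Icc a b))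
    (hφ : ∀ t ∈ Icc a b, φ t = ∫ s in a..t, ψ s) : ContinuousOn φ (Icc a b) := by
  rcases le_or_gt a b with hab | hab
  · rw [← uIcc_of_le hab] at hψ ⊢
    exact (intervalIntegral.continuousOn_primitive_interval hψ).congr
      (by rwa [uIcc_of_le hab])
  · simp [Icc_eq_empty_of_lt hab]

end Primitive

section Variation

variable {α E : Type*} [LinearOrder α] [PseudoMetricSpace E] {f : α → E} {s : Set α}

theorem LocallyBoundedVariationOn.dist_le_abs_variationOnFromTo_sub
    (hf : LocallyBoundedVariationOn f s) {a x y : α} (ha : a ∈ s) (hx : x ∈ s) (hy : y ∈ s) :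
    dist (f x) (f y) ≤ |variationOnFromTo f s a y - variationOnFromTo f s a x| := by
  wlog hxy : x ≤ y generalizing x y
  · rw [dist_comm, abs_sub_comm]
    exact this hy hx (le_of_not_ge hxy)
  rw [← variationOnFromTo.add hf ha hx hy, add_sub_cancel_left,
    variationOnFromTo.eq_of_le f s hxy, dist_edist]
  refine (ENNReal.toReal_mono (hf x y hx hy) ?_).trans (le_abs_self _)
  exact eVariationOn.edist_le f ⟨hx, le_rfl, hxy⟩ ⟨hy, hxy, le_rfl⟩

variable [TopologicalSpace α]

theorem LocallyBoundedVariationOn.continuousWithinAt_of_variationOnFromTo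
    (hf : LocallyBoundedVariationOn f s) {a x : α} (ha : a ∈ s) (hx : x ∈ s)
    (hV : ContinuousWithinAt (variationOnFromTo f s a) s x) : ContinuousWithinAt f s x := by
  rw [ContinuousWithinAt, tendsto_iff_dist_tendsto_zero]
  refine squeeze_zero' (Eventually.of_forall fun _ => dist_nonneg) ?_
    (tendsto_iff_norm_sub_tendsto_zero.1 hV)
  filter_upwards [self_mem_nhdsWithin] with y hy
  rw [Real.norm_eq_abs, abs_sub_comm]
  exact hf.dist_le_abs_variationOnFromTo_sub ha hy hx

theorem LocallyBoundedVariationOn.countable_not_continuousWithinAt [OrderTopology α]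
    (hf : LocallyBoundedVariationOn f s) : {x ∈ s | ¬ContinuousWithinAt f s x}.Countable := by
  rcases s.eq_empty_or_nonempty with rfl | ⟨a, ha⟩
  · simp
  refine ((variationOnFromTo.monotoneOn hf ha).countable_not_continuousWithinAt).mono ?_
  rintro x ⟨hx, hfx⟩
  exact ⟨hx, fun hV => hfx (hf.continuousWithinAt_of_variationOnFromTo ha hx hV)⟩

end Variation

namespace GoodBV

variable {d : ℕ} (C : GoodBV d) {x : ℝ}

theorem cl_eq_of_continuousWithinAt (hx : x ∈ Icc 0 1)
    (hc : ContinuousWithinAt C.c (Icc 0 1) x) : C.cl x = C.c x := by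
  rcases hx.1.eq_or_lt with rfl | hx0
  · exact C.l0
  · have := right_nhdsWithin_Ico_neBot hx0
    exact tendsto_nhds_unique (C.left x ⟨hx0, hx.2⟩)
      (hc.mono (Ico_subset_Icc_self.trans (Icc_subset_Icc_right hx.2)))

theorem cr_eq_of_continuousWithinAt (hx : x ∈ Icc 0 1)
    (hc : ContinuousWithinAt C.c (Icc 0 1) x) : C.cr x = C.c x := by
  rcases hx.2.eq_or_lt with rfl | hx1
  · exact C.r1
  · have := left_nhdsWithin_Ioc_neBot hx1
    exact tendsto_nhds_unique (C.right x ⟨hx.1, hx1⟩)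
      (hc.mono (Ioc_subset_Icc_self.trans (Icc_subset_Icc_left hx.1)))

theorem eq_of_mem_segment_of_continuousWithinAt {y : EuclideanSpace ℝ (Fin d)} (hx : x ∈ Icc 0 1)
    (hc : ContinuousWithinAt C.c (Icc 0 1) x) (hy : y ∈ segment ℝ (C.cl x) (C.cr x)) :
    y = C.c x := by
  rwa [C.cl_eq_of_continuousWithinAt hx hc, C.cr_eq_of_continuousWithinAt hx hc, segment_same,
    mem_singleton_iff] at hy

end GoodBV

/-- Let `c ∈ BV([0,1];ℝ^d)` (good representative) and `φ ∈ Γ̄`.  If `c`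
is continuous or `φ` is injective, then the set
`[c,φ] = {g : g(x) ∈ [c^ℓ(φ(x)), c^r(φ(x))] ∀x, len(g) = len(c)}` consists of the
single element `c ∘ φ` (as a curve on `[0,1]`, up to the usual identification of BV
functions agreeing almost everywhere): `c ∘ φ ∈ [c,φ]` and every `g ∈ [c,φ]` agrees
a.e. on `[0,1]` with `c ∘ φ`. -/
theorem reparam_set_singleton (d : ℕ)
    (C : GoodBV d) (φ ψ : ℝ → ℝ)
    (hψint : IntegrableOn ψ (Icc (0:ℝ) 1))
    (hψ0 : ∀ᵐ t ∂(volume.restrict (Icc (0:ℝ) 1)), 0 ≤ ψ t)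
    (hφ : ∀ t ∈ Icc (0:ℝ) 1, φ t = ∫ s in (0:ℝ)..t, ψ s)
    (hφ1 : φ 1 = 1)
    (hcase : ContinuousOn C.c (Icc (0:ℝ) 1) ∨ InjOn φ (Icc (0:ℝ) 1)) :
    ((∀ t ∈ Icc (0:ℝ) 1, C.c (φ t) ∈ segment ℝ (C.cl (φ t)) (C.cr (φ t))) ∧
      eVariationOn (fun t => C.c (φ t)) (Icc (0:ℝ) 1) = eVariationOn C.c (Icc (0:ℝ) 1)) ∧
    ∀ g : ℝ → EuclideanSpace ℝ (Fin d),
      BoundedVariationOn g (Icc (0:ℝ) 1) →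
      (∀ t ∈ Icc (0:ℝ) 1, g t ∈ segment ℝ (C.cl (φ t)) (C.cr (φ t))) →
      eVariationOn g (Icc (0:ℝ) 1) = eVariationOn C.c (Icc (0:ℝ) 1) →
      g =ᵐ[volume.restrict (Icc (0:ℝ) 1)] fun t => C.c (φ t) := by
  have hφ0 : φ 0 = 0 := by simpa using hφ 0 (left_mem_Icc.2 zero_le_one)
  have hmono := monotoneOn_of_eq_intervalIntegral_of_nonneg hψint hψ0 hφ
  have himage : φ '' Icc 0 1 = Icc 0 1 := by
    rw [(continuousOn_of_eq_intervalIntegral hψint hφ).image_Icc_of_monotoneOn zero_le_one hmono,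
      hφ0, hφ1]
  have hmaps : MapsTo φ (Icc 0 1) (Icc 0 1) := fun t ht => himage.subset (mem_image_of_mem φ ht)
  refine ⟨⟨fun t ht => C.good _ (hmaps ht), ?_⟩, fun g _ hg _ => ?_⟩
  · exact (eVariationOn.comp_eq_of_monotoneOn C.c φ hmono).trans (by rw [himage])
  set bad := {t ∈ Icc (0:ℝ) 1 | ¬ContinuousWithinAt C.c (Icc 0 1) (φ t)}
  have hbad : volume bad = 0 := by
    rcases hcase with hc | hinj
    · have hbad_empty : bad = ∅ :=
        eq_empty_of_forall_notMem fun t ht => ht.2 (hc _ (hmaps ht.1))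
      rw [hbad_empty, measure_empty]
    · have hbad_maps : MapsTo φ bad {y ∈ Icc 0 1 | ¬ContinuousWithinAt C.c (Icc 0 1) y} :=
        fun t ht => ⟨hmaps ht.1, ht.2⟩
      exact (hbad_maps.countable_of_injOn (hinj.mono fun t ht => ht.1)
        C.bv.locallyBoundedVariationOn.countable_not_continuousWithinAt).measure_zero _
  filter_upwards [ae_restrict_mem measurableSet_Icc,
    ae_restrict_of_ae (measure_eq_zero_iff_ae_notMem.1 hbad)] with t ht htbad
  have hct : ContinuousWithinAt C.c (Icc 0 1) (φ t) := not_not.1 fun h => htbad ⟨ht, h⟩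
  rw [C.eq_of_mem_segment_of_continuousWithinAt (hmaps ht) hct (hg t ht)]
end

section
/- Let φ₁, φ₂ ∈ Γ̄. Then there exist ψ ∈ Γ̄ and γ₁, γ₂ ∈ Γ̄ with γ₁'(x) + γ₂'(x) = 2 for a.e. x ∈ [0,1] (so each γᵢ is 2-Lipschitz), such that φᵢ = γᵢ ∘ ψ for i = 1,2. -/
/-!
Take `ψ = (φ₁ + φ₂)/2`. As `φ₁` and `φ₂` are nondecreasing, `φ₁` can increase only where `ψ`
does, and then by at most twice as much. So `φ₁` composed with a right inverse of `ψ` is a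
nondecreasing `γ₁` with `φ₁ = γ₁ ∘ ψ` such that `γ₂ y = 2y - γ₁ y` is nondecreasing too, and
`φ₂ = γ₂ ∘ ψ`. Two nondecreasing functions adding up to `2y` are `2`-Lipschitz, hence absolutely
continuous, and their derivatives are densities adding up to `2` almost everywhere.
-/

open MeasureTheory Set

/-- `γ ∈ Γ̄` with density (a.e. derivative) `g`: `γ` is absolutely continuous on
`[0,1]` with `γ(x) = ∫₀ˣ g`, `g ≥ 0` a.e., `γ(0) = 0` and `γ(1) = 1`. -/
def InGammaBar (γ g : ℝ → ℝ) : Prop :=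
  IntegrableOn g (Set.Icc (0:ℝ) 1) ∧
  (∀ᵐ x ∂(volume.restrict (Set.Icc (0:ℝ) 1)), 0 ≤ g x) ∧
  (∀ x ∈ Set.Icc (0:ℝ) 1, γ x = ∫ t in (0:ℝ)..x, g t) ∧
  γ 1 = 1

namespace InGammaBar

variable {γ g : ℝ → ℝ}

lemma intervalIntegrable (h : InGammaBar γ g) {x y : ℝ} (hx : x ∈ Icc (0:ℝ) 1)
    (hy : y ∈ Icc (0:ℝ) 1) : IntervalIntegrable g volume x y :=
  (h.1.mono_set (uIcc_subset_Icc hx hy)).intervalIntegrable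

lemma map_zero (h : InGammaBar γ g) : γ 0 = 0 := by
  rw [h.2.2.1 0 ⟨le_rfl, zero_le_one⟩, intervalIntegral.integral_same]

lemma monotoneOn (h : InGammaBar γ g) : MonotoneOn γ (Icc 0 1) := by
  intro x hx y hy hxy
  have hzero : (0:ℝ) ∈ Icc (0:ℝ) 1 := ⟨le_rfl, zero_le_one⟩
  have hinc : γ y - γ x = ∫ t in x..y, g t := by
    rw [h.2.2.1 x hx, h.2.2.1 y hy, intervalIntegral.integral_interval_sub_left
      (h.intervalIntegrable hzero hy) (h.intervalIntegrable hzero hx)]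
  have hpos : 0 ≤ ∫ t in x..y, g t := intervalIntegral.integral_nonneg_of_ae_restrict hxy
    (ae_restrict_of_ae_restrict_of_subset (Icc_subset_Icc hx.1 hy.2) h.2.1)
  linarith

lemma continuousOn (h : InGammaBar γ g) : ContinuousOn γ (Icc 0 1) := by
  have hprim := intervalIntegral.continuousOn_primitive_interval (a := 0) (b := 1) (μ := volume)
    (f := g) (by rw [uIcc_of_le zero_le_one]; exact h.1)
  rw [uIcc_of_le zero_le_one] at hprim
  exact hprim.congr h.2.2.1

lemma average {φ₁ φ₂ g₁ g₂ : ℝ → ℝ} (h₁ : InGammaBar φ₁ g₁) (h₂ : InGammaBar φ₂ g₂) :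
    InGammaBar (fun x => (φ₁ x + φ₂ x) / 2) (fun x => (g₁ x + g₂ x) / 2) := by
  refine ⟨(h₁.1.add h₂.1).div_const 2, ?_, fun x hx => ?_, by simp [h₁.2.2.2, h₂.2.2.2]⟩
  · filter_upwards [h₁.2.1, h₂.2.1] with x hx₁ hx₂
    positivity
  · have hzero : (0:ℝ) ∈ Icc (0:ℝ) 1 := ⟨le_rfl, zero_le_one⟩
    beta_reduce
    rw [h₁.2.2.1 x hx, h₂.2.2.1 x hx, intervalIntegral.integral_div,
      intervalIntegral.integral_add (h₁.intervalIntegrable hzero hx)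
        (h₂.intervalIntegrable hzero hx)]

end InGammaBar

lemma MonotoneOn.le_of_add_le {α β : Type*} [LinearOrder α] [AddCommMonoid β] [LinearOrder β]
    [IsOrderedCancelAddMonoid β] {f g : α → β} {s : Set α} (hf : MonotoneOn f s)
    (hg : MonotoneOn g s) {x y : α} (hx : x ∈ s) (hy : y ∈ s) (h : f x + g x ≤ f y + g y) :
    f x ≤ f y := by
  rcases le_total x y with hxy | hyx
  · exact hf hx hy hxy
  · by_contra! hlt
    exact (add_lt_add_of_lt_of_le hlt (hg hy hx hyx)).not_ge h

lemma Set.projIcc_sub_projIcc_le {a b x y : ℝ} (hab : a ≤ b) (hxy : x ≤ y) :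
    (projIcc a b hab y : ℝ) - projIcc a b hab x ≤ y - x := by
  simp only [coe_projIcc]
  grind

lemma exists_monotone_factor_through_average {φ₁ φ₂ : ℝ → ℝ} {a b : ℝ} (hab : a ≤ b)
    (h₁ : MonotoneOn φ₁ (Icc a b)) (h₂ : MonotoneOn φ₂ (Icc a b))
    (hψ : ContinuousOn (fun x => (φ₁ x + φ₂ x) / 2) (Icc a b)) :
    ∃ γ : ℝ → ℝ, Monotone γ ∧ Monotone (fun y => 2 * y - γ y) ∧
      ∀ x ∈ Icc a b, φ₁ x = γ ((φ₁ x + φ₂ x) / 2) := by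
  set ψ : ℝ → ℝ := fun x => (φ₁ x + φ₂ x) / 2
  have hcontrol : ∀ x ∈ Icc a b, ∀ x' ∈ Icc a b, ψ x ≤ ψ x' →
      φ₁ x ≤ φ₁ x' ∧ φ₁ x' - φ₁ x ≤ 2 * (ψ x' - ψ x) := by
    intro x hx x' hx' hψx
    have hsum : φ₁ x + φ₂ x ≤ φ₁ x' + φ₂ x' := by simp only [ψ] at hψx; linarith
    have hφ₂ := h₂.le_of_add_le h₁ hx hx' (by linarith)
    exact ⟨h₁.le_of_add_le h₂ hx hx' hsum, by simp only [ψ]; linarith⟩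
  have ha : a ∈ Icc a b := left_mem_Icc.2 hab
  have hb : b ∈ Icc a b := right_mem_Icc.2 hab
  have hψab : ψ a ≤ ψ b := by simp only [ψ]; linarith [h₁ ha hb hab, h₂ ha hb hab]
  set p : ℝ → ℝ := fun y => projIcc (ψ a) (ψ b) hψab y
  set σ : ℝ → ℝ := Function.invFunOn ψ (Icc a b)
  have hσ : ∀ y, σ (p y) ∈ Icc a b ∧ ψ (σ (p y)) = p y := fun y =>
    Function.invFunOn_pos (intermediate_value_Icc hab hψ (projIcc (ψ a) (ψ b) hψab y).2)
  have hcontrol_σ : ∀ {y y'}, y ≤ y' →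
      φ₁ (σ (p y)) ≤ φ₁ (σ (p y')) ∧ φ₁ (σ (p y')) - φ₁ (σ (p y)) ≤ 2 * (p y' - p y) :=
    fun {y y'} hyy' => by
      simpa only [(hσ y).2, (hσ y').2] using hcontrol _ (hσ y).1 _ (hσ y').1
        (by rw [(hσ y).2, (hσ y').2]; exact monotone_projIcc hψab hyy')
  refine ⟨fun y => φ₁ (σ (p y)), fun y y' hyy' => (hcontrol_σ hyy').1, fun y y' hyy' => ?_,
    fun x hx => ?_⟩
  · have := projIcc_sub_projIcc_le hψab hyy'
    linarith [(hcontrol_σ hyy').2]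
  · have hψx : ψ x ∈ Icc (ψ a) (ψ b) := by
      simp only [ψ, mem_Icc]
      constructor <;> linarith [h₁ ha hx hx.1, h₂ ha hx hx.1, h₁ hx hb hx.2, h₂ hx hb hx.2]
    have hp : p (ψ x) = ψ x := by simp only [p, projIcc_of_mem hψab hψx]
    obtain ⟨hσx, hψσx⟩ := hσ (ψ x)
    rw [hp] at hσx hψσx
    show φ₁ x = φ₁ (σ (p (ψ x)))
    rw [hp]
    exact le_antisymm (hcontrol _ hx _ hσx hψσx.ge).1 (hcontrol _ hσx _ hx hψσx.le).1

lemma LipschitzWith.of_monotone_of_add_eq_mul {f g : ℝ → ℝ} {K : NNReal} (hf : Monotone f)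
    (hg : Monotone g) (hfg : ∀ x, f x + g x = K * x) : LipschitzWith K f := by
  refine LipschitzWith.of_le_add_mul K fun x y => ?_
  rcases le_total x y with hxy | hyx
  · nlinarith [hf hxy, dist_nonneg (x := x) (y := y), K.coe_nonneg]
  · have := hg hyx
    rw [Real.dist_eq, abs_of_nonneg (sub_nonneg.2 hyx)]
    linarith [hfg x, hfg y]

lemma inGammaBar_deriv_of_lipschitzWith {γ : ℝ → ℝ} {K : NNReal} (hmono : Monotone γ)
    (hlip : LipschitzWith K γ) (h0 : γ 0 = 0) (h1 : γ 1 = 1) : InGammaBar γ (deriv γ) := by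
  have hac : ∀ x, AbsolutelyContinuousOnInterval γ 0 x := fun x =>
    hlip.lipschitzOnWith.absolutelyContinuousOnInterval
  refine ⟨?_, .of_forall fun x => hmono.deriv_nonneg, fun x _ => ?_, h1⟩
  · exact (intervalIntegrable_iff_integrableOn_Icc_of_le zero_le_one).1
      (hac 1).intervalIntegrable_deriv
  · rw [(hac x).integral_deriv_eq_sub, h0, sub_zero]

/-- For `φ₁, φ₂ ∈ Γ̄` there exist `ψ ∈ Γ̄` and `γ₁, γ₂ ∈ Γ̄` with
`γ₁' + γ₂' = 2` a.e. (so each `γᵢ` is `2`-Lipschitz) such that `φᵢ = γᵢ ∘ ψ`. -/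
theorem reparam_factorisation (φ₁ φ₂ g₁ g₂ : ℝ → ℝ)
    (h₁ : InGammaBar φ₁ g₁) (h₂ : InGammaBar φ₂ g₂) :
    ∃ ψ gψ γ₁ γ₂ h₁' h₂' : ℝ → ℝ,
      InGammaBar ψ gψ ∧ InGammaBar γ₁ h₁' ∧ InGammaBar γ₂ h₂' ∧
      (∀ᵐ x ∂(volume.restrict (Icc (0:ℝ) 1)), h₁' x + h₂' x = 2) ∧
      (LipschitzOnWith 2 γ₁ (Icc (0:ℝ) 1)) ∧ (LipschitzOnWith 2 γ₂ (Icc (0:ℝ) 1)) ∧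
      (∀ x ∈ Icc (0:ℝ) 1, φ₁ x = γ₁ (ψ x)) ∧
      (∀ x ∈ Icc (0:ℝ) 1, φ₂ x = γ₂ (ψ x)) := by
  have hψ := h₁.average h₂
  obtain ⟨γ, hγ, hγ', hfac⟩ := exists_monotone_factor_through_average zero_le_one
    h₁.monotoneOn h₂.monotoneOn hψ.continuousOn
  have hγ0 : γ 0 = 0 := by
    simpa [h₁.map_zero, h₂.map_zero] using (hfac 0 (left_mem_Icc.2 zero_le_one)).symm
  have hγ1 : γ 1 = 1 := by
    simpa [h₁.2.2.2, h₂.2.2.2] using (hfac 1 (right_mem_Icc.2 zero_le_one)).symm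
  have hlip₁ : LipschitzWith 2 γ := .of_monotone_of_add_eq_mul hγ hγ' fun y => by push_cast; ring
  have hlip₂ : LipschitzWith 2 (fun y => 2 * y - γ y) :=
    .of_monotone_of_add_eq_mul hγ' hγ fun y => by push_cast; ring
  refine ⟨_, _, γ, fun y => 2 * y - γ y, deriv γ, deriv fun y => 2 * y - γ y, hψ,
    inGammaBar_deriv_of_lipschitzWith hγ hlip₁ hγ0 hγ1,
    inGammaBar_deriv_of_lipschitzWith hγ' hlip₂ (by simp [hγ0]) (by norm_num [hγ1]), ?_,
    hlip₁.lipschitzOnWith, hlip₂.lipschitzOnWith, hfac,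
    fun x hx => by beta_reduce; rw [← hfac x hx]; ring⟩
  filter_upwards [ae_restrict_of_ae hlip₁.ae_differentiableAt] with y hy
  have hderiv : HasDerivAt (fun y => 2 * y - γ y) (2 * 1 - deriv γ y) y :=
    ((hasDerivAt_id' y).const_mul 2).sub hy.hasDerivAt
  rw [hderiv.deriv]
  ring
end
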